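/- arXiv:2009.04752 — 2 statements merged into one kernel-verified Lean document; each statement's English description precedes it below -/
import Mathlib

section
/- Let s > 0 be real, N ≥ 1 an integer, and let I* ⊂ ℝ be a nonempty open interval. Suppose f, g : ℝ → ℝ are polynomial functions of degree at most N−1 which each satisfy the difference equation (★) at every x ∈ I*, and suppose g is not identically zero. Then there exists a constant c ∈ ℝ such that f(x) = c·g(x) for all x ∈ ℝ. -/
open MeasureTheory Real Filter

noncomputable section

/-- Pochhammer symbol `(a)_j = a(a+1)⋯(a+j-1)` for complex `a`. -/
def poch (a : ℂ) (j : ℕ) : ℂ := ∏ i ∈ Finset.range j, (a + i)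

/-- The monic pseudo-Jacobi polynomial `p_m^{s,N}` (complex-valued formula). -/
def pJC (s : ℝ) (N m : ℕ) (x : ℝ) : ℂ :=
  ∑ j ∈ Finset.range (m + 1),
    poch (-(m : ℂ)) j * poch ((s : ℂ) + N - m) j /
      (poch (2 * (s : ℂ) + 2 * N - 2 * m) j * (Nat.factorial j : ℂ)) *
    (-2 * Complex.I) ^ j * ((x : ℂ) - Complex.I) ^ (m - j)

/-- The pseudo-Jacobi polynomial as a real-valued function (it has real values
for real `s` and real `x`). -/
def pJ (s : ℝ) (N m : ℕ) (x : ℝ) : ℝ := (pJC s N m x).re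

/-- The pseudo-Jacobi weight `φ_N^s(x) = (1+x²)^{-(N+s)}`. -/
def phi (s : ℝ) (N : ℕ) (x : ℝ) : ℝ := (1 + x ^ 2) ^ (-((N : ℝ) + s))

/-- The normalizing constant `γ²_{N-1,s}`. -/
def gammaSq (s : ℝ) (N : ℕ) : ℝ :=
  (2 : ℝ) ^ (2 * s) / Real.pi * Real.Gamma (2 * s + N + 1) * Real.Gamma (s + 1) ^ 2 /
    (Real.Gamma N * Real.Gamma (2 * s + 1) * Real.Gamma (2 * s + 2))

/-- The one-point density of the generalized Cauchy (Hua–Pickrell) ensemble. -/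
def rho (s : ℝ) (N : ℕ) (x : ℝ) : ℝ :=
  gammaSq s N * phi s N x *
    (pJ s N (N - 1) x * deriv (pJ s N N) x - pJ s N N x * deriv (pJ s N (N - 1)) x)

/-- The sum of moments `Q(k;s,N) = ∫_ℝ |x|^{2k}(1+x²)ρ_N^s(x) dx`,
with `|x|^{2k} = exp(2k log|x|)`. -/
def Qmom (k : ℂ) (s : ℝ) (N : ℕ) : ℂ :=
  ∫ x : ℝ, Complex.exp (2 * k * Real.log |x|) * (((1 + x ^ 2) * rho s N x : ℝ) : ℂ)

/-- `J(k;s,N) = Q(k;s,N)/(Γ(k+1/2)Γ(s-k-1/2))`. -/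
def Jmom (k : ℂ) (s : ℝ) (N : ℕ) : ℂ :=
  Qmom k s N / (Complex.Gamma (k + 1 / 2) * Complex.Gamma ((s : ℂ) - k - 1 / 2))

/-- The continuous-Hahn polynomial `S_n(x;a,b,c,d)`. -/
def contHahn (n : ℕ) (x a b c d : ℂ) : ℂ :=
  Complex.I ^ n * (poch (a + c) n * poch (a + d) n / (Nat.factorial n : ℂ)) *
    ∑ j ∈ Finset.range (n + 1),
      poch (-(n : ℂ)) j * poch (n + a + b + c + d - 1) j * poch (a + Complex.I * x) j /
        (poch (a + c) j * poch (a + d) j * (Nat.factorial j : ℂ))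

end

noncomputable section

lemma myPolyZero (p : Polynomial ℝ) (h : ∀ n : ℕ, p.eval (n:ℝ) = 0) : p = 0 := by
  refine Polynomial.eq_zero_of_infinite_isRoot p ?_
  exact (Set.infinite_range_of_injective (Nat.cast_injective : Function.Injective
    ((↑·) : ℕ → ℝ))).mono (by rintro _ ⟨n, rfl⟩; exact h n)

lemma myExtend (s : ℝ) (N : ℕ) {a b : ℝ} (hab : a < b) (p : Polynomial ℝ)
    (h : ∀ x ∈ Set.Ioo a b,
      (2 * x + 4) * (2 * s + 2 * x + 3) * p.eval (x + 1) +
        2 * x * (2 * x + 1 - 2 * s) * p.eval (x - 1) =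
        2 * (2 * N * (N + 2 * s) + (2 * x + 2) ^ 2) * p.eval x) :
    ∀ x : ℝ,
      (2 * x + 4) * (2 * s + 2 * x + 3) * p.eval (x + 1) +
        2 * x * (2 * x + 1 - 2 * s) * p.eval (x - 1) =
        2 * (2 * N * (N + 2 * s) + (2 * x + 2) ^ 2) * p.eval x := by
  set P : Polynomial ℝ :=
    (2 * Polynomial.X + 4) * (Polynomial.C (2 * s) + 2 * Polynomial.X + 3) *
        p.comp (Polynomial.X + 1) +
      2 * Polynomial.X * (2 * Polynomial.X + 1 - Polynomial.C (2 * s)) *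
        p.comp (Polynomial.X - 1) -
      (Polynomial.C (2 * (2 * (N:ℝ) * ((N:ℝ) + 2 * s))) + 2 * (2 * Polynomial.X + 2) ^ 2) * p
    with hPdef
  have hev : ∀ x : ℝ, P.eval x =
      (2 * x + 4) * (2 * s + 2 * x + 3) * p.eval (x + 1) +
        2 * x * (2 * x + 1 - 2 * s) * p.eval (x - 1) -
        2 * (2 * N * (N + 2 * s) + (2 * x + 2) ^ 2) * p.eval x := by
    intro x
    simp only [hPdef, Polynomial.eval_add, Polynomial.eval_sub, Polynomial.eval_mul,
      Polynomial.eval_pow, Polynomial.eval_comp, Polynomial.eval_C, Polynomial.eval_X,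
      Polynomial.eval_ofNat, Polynomial.eval_one]
    ring
  have hP0 : P = 0 := by
    refine Polynomial.eq_zero_of_infinite_isRoot P ?_
    refine (Set.Ioo_infinite hab).mono ?_
    intro x hx
    have := h x hx
    simp only [Set.mem_setOf_eq, Polynomial.IsRoot, hev x]
    linarith
  intro x
  have := hev x
  rw [hP0] at this
  simp at this
  linarith

end

noncomputable section

lemma myVanish (s : ℝ) (hs : 0 < s) (N : ℕ) (p : Polynomial ℝ)
    (h : ∀ x : ℝ,
      (2 * x + 4) * (2 * s + 2 * x + 3) * p.eval (x + 1) +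
        2 * x * (2 * x + 1 - 2 * s) * p.eval (x - 1) =
        2 * (2 * N * (N + 2 * s) + (2 * x + 2) ^ 2) * p.eval x)
    (h0 : p.eval 0 = 0) : ∀ n : ℕ, p.eval (n : ℝ) = 0 := by
  have key : ∀ n : ℕ, p.eval (n : ℝ) = 0 ∧ p.eval ((n : ℝ) + 1) = 0 := by
    intro n
    induction n with
    | zero =>
      refine ⟨by simpa using h0, ?_⟩
      have h1 := h 0
      norm_num [h0] at h1 ⊢
      rcases h1 with h1 | h1
      · linarith
      · exact h1
    | succ m ih =>
      obtain ⟨ih0, ih1⟩ := ih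
      have h1 := h ((m : ℝ) + 1)
      have e1 : ((m : ℝ) + 1 + 1) = ((m : ℝ) + 2) := by ring
      have e2 : ((m : ℝ) + 1 - 1) = (m : ℝ) := by ring
      rw [e1, e2, ih0, ih1] at h1
      have hA : (0:ℝ) < (2 * ((m : ℝ) + 1) + 4) * (2 * s + 2 * ((m : ℝ) + 1) + 3) := by
        have : (0:ℝ) ≤ (m:ℝ) := Nat.cast_nonneg m
        nlinarith
      constructor
      · push_cast; exact ih1
      · push_cast
        have : (2 * ((m:ℝ) + 1) + 4) * (2 * s + 2 * ((m:ℝ) + 1) + 3) * p.eval ((m:ℝ) + 2) = 0 := by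
          linarith
        have h2 := mul_eq_zero.mp this
        rcases h2 with h2 | h2
        · exact absurd h2 (ne_of_gt hA)
        · rw [show (m:ℝ) + 1 + 1 = (m:ℝ) + 2 by ring]; exact h2
  exact fun n => (key n).1

lemma myCasoratian (s : ℝ) (hs : 0 < s) (N : ℕ) (p q : Polynomial ℝ)
    (hp : ∀ x : ℝ,
      (2 * x + 4) * (2 * s + 2 * x + 3) * p.eval (x + 1) +
        2 * x * (2 * x + 1 - 2 * s) * p.eval (x - 1) =
        2 * (2 * N * (N + 2 * s) + (2 * x + 2) ^ 2) * p.eval x)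
    (hq : ∀ x : ℝ,
      (2 * x + 4) * (2 * s + 2 * x + 3) * q.eval (x + 1) +
        2 * x * (2 * x + 1 - 2 * s) * q.eval (x - 1) =
        2 * (2 * N * (N + 2 * s) + (2 * x + 2) ^ 2) * q.eval x) :
    ∀ n : ℕ, p.eval 0 * q.eval (n : ℝ) = q.eval 0 * p.eval (n : ℝ) := by
  have key : ∀ n : ℕ, p.eval 0 * q.eval (n : ℝ) = q.eval 0 * p.eval (n : ℝ) ∧
      p.eval 0 * q.eval ((n : ℝ) + 1) = q.eval 0 * p.eval ((n : ℝ) + 1) := by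
    intro n
    induction n with
    | zero =>
      refine ⟨by push_cast; ring, ?_⟩
      have h1 := hp 0
      have h2 := hq 0
      norm_num at h1 h2 ⊢
      have hD : (4 * (2 * s + 3) : ℝ) ≠ 0 := by positivity
      have key : 4 * (2 * s + 3) * (p.eval 0 * q.eval 1) =
          4 * (2 * s + 3) * (q.eval 0 * p.eval 1) := by
        linear_combination Polynomial.eval 0 p * h2 - Polynomial.eval 0 q * h1
      exact mul_left_cancel₀ hD key
    | succ m ih =>
      obtain ⟨ih0, ih1⟩ := ih
      have h1 := hp ((m : ℝ) + 1)
      have h2 := hq ((m : ℝ) + 1)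
      have e1 : ((m : ℝ) + 1 + 1) = ((m : ℝ) + 2) := by ring
      have e2 : ((m : ℝ) + 1 - 1) = (m : ℝ) := by ring
      rw [e1, e2] at h1 h2
      have hA : (0:ℝ) < (2 * ((m : ℝ) + 1) + 4) * (2 * s + 2 * ((m : ℝ) + 1) + 3) := by
        have : (0:ℝ) ≤ (m:ℝ) := Nat.cast_nonneg m
        nlinarith
      refine ⟨by push_cast; exact ih1, ?_⟩
      push_cast
      rw [show (m:ℝ) + 1 + 1 = (m:ℝ) + 2 by ring]
      have hz : (2 * ((m : ℝ) + 1) + 4) * (2 * s + 2 * ((m : ℝ) + 1) + 3) *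
          (p.eval 0 * q.eval ((m:ℝ) + 2) - q.eval 0 * p.eval ((m:ℝ) + 2)) = 0 := by
        linear_combination Polynomial.eval 0 p * h2 - Polynomial.eval 0 q * h1 -
          (2 * ((m:ℝ) + 1) * (2 * ((m:ℝ) + 1) + 1 - 2 * s)) * ih0 +
          (2 * (2 * (N:ℝ) * ((N:ℝ) + 2 * s) + (2 * ((m:ℝ) + 1) + 2) ^ 2)) * ih1
      have := mul_eq_zero.mp hz
      rcases this with h' | h'
      · exact absurd h' (ne_of_gt hA)
      · linarith
  exact fun n => (key n).1

end

noncomputable section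

theorem stmt3 (s : ℝ) (hs : 0 < s) (N : ℕ) (hN : 1 ≤ N)
    (a b : ℝ) (hab : a < b)
    (f g : ℝ → ℝ) (pf pg : Polynomial ℝ)
    (hf : ∀ x, f x = pf.eval x) (hg : ∀ x, g x = pg.eval x)
    (hdf : pf.natDegree ≤ N - 1) (hdg : pg.natDegree ≤ N - 1)
    (hg0 : ∃ x, g x ≠ 0)
    (hfe : ∀ x ∈ Set.Ioo a b,
      (2 * x + 4) * (2 * s + 2 * x + 3) * f (x + 1) + 2 * x * (2 * x + 1 - 2 * s) * f (x - 1) =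
        2 * (2 * N * (N + 2 * s) + (2 * x + 2) ^ 2) * f x)
    (hge : ∀ x ∈ Set.Ioo a b,
      (2 * x + 4) * (2 * s + 2 * x + 3) * g (x + 1) + 2 * x * (2 * x + 1 - 2 * s) * g (x - 1) =
        2 * (2 * N * (N + 2 * s) + (2 * x + 2) ^ 2) * g x) :
    ∃ c : ℝ, ∀ x : ℝ, f x = c * g x := by
  have Hf := myExtend s N hab pf (fun x hx => by simpa only [hf] using hfe x hx)
  have Hg := myExtend s N hab pg (fun x hx => by simpa only [hg] using hge x hx)
  by_cases h0 : pg.eval 0 = 0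
  · exfalso
    have hv := myVanish s hs N pg Hg h0
    have : pg = 0 := myPolyZero pg hv
    obtain ⟨x, hx⟩ := hg0
    exact hx (by rw [hg, this, Polynomial.eval_zero])
  · have hc := myCasoratian s hs N pg pf Hg Hf
    have hq : Polynomial.C (pg.eval 0) * pf - Polynomial.C (pf.eval 0) * pg = 0 := by
      apply myPolyZero
      intro n
      simp only [Polynomial.eval_sub, Polynomial.eval_mul, Polynomial.eval_C]
      have := hc n
      linarith
    refine ⟨pf.eval 0 / pg.eval 0, fun x => ?_⟩
    have hx := congrArg (Polynomial.eval x) hq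
    simp only [Polynomial.eval_sub, Polynomial.eval_mul, Polynomial.eval_C,
      Polynomial.eval_zero] at hx
    rw [hf, hg]
    field_simp
    linarith

end
end

section
/- Let s > −1/2 be real and N ≥ 1 an integer. Then for every x ∈ ℝ, (d/dx)[(1+x²)·ρ_N^s(x)] = −2s · γ²_{N−1,s} · φ_N^s(x) · p_N^{s,N}(x) · p_{N−1}^{s,N}(x). -/
open MeasureTheory Real Filter

noncomputable section

/-!
The polynomial `p_m = p_m^{s,N}` solves the hypergeometric equation
`(1 + x²) p'' + 2 (1 - s - N) x p' + m (2s + 2N - m - 1) p = 0`: expanded in powers of `x - i`,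
the equation becomes a two-term recurrence, which the coefficients of `p_m` satisfy. If `f` and `g`
solve this equation with constants `a` and `b`, their Wronskian `W = g f' - f g'` satisfies
`((1 + x²) (1 + x²)^(-s-N) W)' = (b - a) (1 + x²)^(-s-N) f g`; for `f = p_N`, `g = p_{N-1}` one has
`b - a = -2s`.
-/

open Polynomial Finset

lemma poch_succ (a : ℂ) (j : ℕ) : poch a (j + 1) = poch a j * (a + j) :=
  prod_range_succ _ _

lemma hasDerivAt_re_eval (P : ℂ[X]) (x : ℝ) :
    HasDerivAt (fun y : ℝ => (P.eval (y : ℂ)).re) ((derivative P).eval (x : ℂ)).re x :=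
  (P.hasDerivAt x).real_of_complex

lemma deriv_re_eval (P : ℂ[X]) :
    deriv (fun y : ℝ => (P.eval (y : ℂ)).re) = fun x : ℝ => ((derivative P).eval (x : ℂ)).re :=
  funext fun x => (hasDerivAt_re_eval P x).deriv

lemma differentiable_re_eval (P : ℂ[X]) : Differentiable ℝ fun y : ℝ => (P.eval (y : ℂ)).re :=
  fun x => (hasDerivAt_re_eval P x).differentiableAt

lemma ode_X_sub_I_pow (α l z : ℂ) (k : ℕ) :
    (1 + z ^ 2) * (derivative (derivative ((X - C Complex.I) ^ k))).eval z
        + 2 * (1 - α) * z * (derivative ((X - C Complex.I) ^ k)).eval z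
        + l * ((X - C Complex.I) ^ k).eval z
      = (l + k * (k + 1 - 2 * α)) * (z - Complex.I) ^ k
        + 2 * Complex.I * (k * (k - α)) * (z - Complex.I) ^ (k - 1) := by
  simp only [derivative_X_sub_C_pow, derivative_mul, derivative_C, zero_mul, zero_add,
    eval_mul, eval_C, eval_pow, eval_sub, eval_X]
  rcases k with _ | _ | k
  · simp
  · simp only [zero_add, Nat.cast_one, tsub_self, CharP.cast_eq_zero, zero_tsub, pow_zero,
      mul_one, mul_zero, pow_one, one_mul]
    ring
  · simp only [Nat.add_sub_cancel, pow_succ]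
    push_cast
    linear_combination ((k : ℂ) + 2) * (k + 1) * (z - Complex.I) ^ k * Complex.I_sq

lemma hasDerivAt_weighted_wronskian {f g : ℝ → ℝ} {α a b x : ℝ}
    (hf : DifferentiableAt ℝ f x) (hg : DifferentiableAt ℝ g x)
    (hf' : DifferentiableAt ℝ (deriv f) x) (hg' : DifferentiableAt ℝ (deriv g) x)
    (hf_ode : (1 + x ^ 2) * deriv (deriv f) x + 2 * (1 - α) * x * deriv f x + a * f x = 0)
    (hg_ode : (1 + x ^ 2) * deriv (deriv g) x + 2 * (1 - α) * x * deriv g x + b * g x = 0) :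
    HasDerivAt (fun y => (1 + y ^ 2) * ((1 + y ^ 2) ^ (-α) * (g y * deriv f y - f y * deriv g y)))
      ((b - a) * (1 + x ^ 2) ^ (-α) * f x * g x) x := by
  have hpos : (0 : ℝ) < 1 + x ^ 2 := by positivity
  have hq : HasDerivAt (fun y : ℝ => 1 + y ^ 2) (2 * x) x := by
    simpa using (hasDerivAt_pow 2 x).const_add 1
  have hweight := hq.rpow_const (p := -α) (Or.inl hpos.ne')
  have hW := (hg.hasDerivAt.fun_mul hf'.hasDerivAt).fun_sub (hf.hasDerivAt.fun_mul hg'.hasDerivAt)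
  refine (hq.fun_mul (hweight.fun_mul hW)).congr_deriv ?_
  rw [Real.rpow_sub_one hpos.ne']
  field_simp
  linear_combination g x * hf_ode - f x * hg_ode

section PseudoJacobiPolynomial

variable (s : ℝ) (N m : ℕ)

def pJCoeff (j : ℕ) : ℂ :=
  poch (-(m : ℂ)) j * poch ((s : ℂ) + N - m) j /
      (poch (2 * (s : ℂ) + 2 * N - 2 * m) j * (Nat.factorial j : ℂ)) *
    (-2 * Complex.I) ^ j

def pJPoly : ℂ[X] :=
  ∑ j ∈ range (m + 1), C (pJCoeff s N m j) * (X - C Complex.I) ^ (m - j)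

lemma pJ_eq_re_eval : pJ s N m = fun x : ℝ => ((pJPoly s N m).eval (x : ℂ)).re := by
  funext x
  simp [pJ, pJC, pJPoly, pJCoeff, eval_finsetSum]

lemma differentiable_pJ : Differentiable ℝ (pJ s N m) := by
  rw [pJ_eq_re_eval]
  exact differentiable_re_eval _

lemma differentiable_deriv_pJ : Differentiable ℝ (deriv (pJ s N m)) := by
  rw [pJ_eq_re_eval, deriv_re_eval]
  exact differentiable_re_eval _

-- No side conditions: where the denominator vanishes, both sides are `0` since `x / 0 = 0`.
lemma pJCoeff_succ (j : ℕ) :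
    pJCoeff s N m (j + 1) = pJCoeff s N m j * (-2 * Complex.I) * (-m + j) * ((s : ℂ) + N - m + j)
      / ((2 * (s : ℂ) + 2 * N - 2 * m + j) * (j + 1)) := by
  simp only [pJCoeff, poch_succ, Nat.factorial_succ, Nat.cast_mul, Nat.cast_add_one, pow_succ,
    div_eq_mul_inv, mul_inv]
  ring

lemma pJCoeff_recurrence (hs : -(1 / 2) < s) (hm : m ≤ N) (j : ℕ) :
    pJCoeff s N m (j + 1) * ((2 * (s : ℂ) + 2 * N - 2 * m + j) * (j + 1))
      + 2 * Complex.I * pJCoeff s N m j * ((m - j) * (m - j - ((s : ℂ) + N))) = 0 := by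
  rw [pJCoeff_succ]
  -- As `2s + 2N - 2m > -1`, the denominator vanishes only if `j = 0` and `s + N = m`.
  by_cases hT : 2 * (s : ℂ) + 2 * N - 2 * m + j = 0
  · have hT' : 2 * s + 2 * N - 2 * m + j = 0 := by exact_mod_cast hT
    have hmN : (m : ℝ) ≤ N := by exact_mod_cast hm
    obtain rfl : j = 0 := Nat.lt_one_iff.1 (by exact_mod_cast (by linarith : (j : ℝ) < 1))
    have hα : (s : ℂ) + N - m = 0 := by
      linear_combination (1 / 2 : ℂ) * hT
    rw [hT]
    linear_combination (-2 * Complex.I * pJCoeff s N m 0 * m) * hα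
  · rw [div_mul_cancel₀ _ (mul_ne_zero hT (Nat.cast_add_one_ne_zero j))]
    ring

lemma pJPoly_ode (hs : -(1 / 2) < s) (hm : m ≤ N) (z : ℂ) :
    (1 + z ^ 2) * (derivative (derivative (pJPoly s N m))).eval z
        + 2 * (1 - ((s : ℂ) + N)) * z * (derivative (pJPoly s N m)).eval z
        + m * (2 * ((s : ℂ) + N) - m - 1) * (pJPoly s N m).eval z = 0 := by
  set α : ℂ := s + N
  set l : ℂ := m * (2 * α - m - 1)
  set c := pJCoeff s N m
  set u := z - Complex.I
  have expand : (1 + z ^ 2) * (derivative (derivative (pJPoly s N m))).eval z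
        + 2 * (1 - α) * z * (derivative (pJPoly s N m)).eval z + l * (pJPoly s N m).eval z
      = ∑ j ∈ range (m + 1), (c j * (l + (m - j : ℕ) * ((m - j : ℕ) + 1 - 2 * α)) * u ^ (m - j)
          + c j * (2 * Complex.I * ((m - j : ℕ) * ((m - j : ℕ) - α))) * u ^ (m - j - 1)) := by
    simp only [pJPoly, derivative_sum, derivative_C_mul, eval_finsetSum, eval_mul, eval_C,
      mul_sum, ← sum_add_distrib]
    refine sum_congr rfl fun j _ => ?_
    linear_combination c j * ode_X_sub_I_pow α l z (m - j)
  -- Telescoping: term `j + 1` of the first sum cancels term `j` of the second.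
  rw [expand, sum_add_distrib, sum_range_succ', sum_range_succ, add_add_add_comm,
    ← sum_add_distrib]
  have boundary : c 0 * (l + (m - 0 : ℕ) * ((m - 0 : ℕ) + 1 - 2 * α)) * u ^ (m - 0)
      + c m * (2 * Complex.I * ((m - m : ℕ) * ((m - m : ℕ) - α))) * u ^ (m - m - 1) = 0 := by
    simp only [Nat.sub_zero, Nat.sub_self, Nat.cast_zero, zero_mul, mul_zero, add_zero, l]
    ring
  rw [boundary, add_zero]
  refine sum_eq_zero fun j hj => ?_
  have hj : j + 1 ≤ m := mem_range.1 hj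
  have hk : ((m - (j + 1) : ℕ) : ℂ) = m - j - 1 := by push_cast [Nat.cast_sub hj]; ring
  rw [hk, Nat.cast_sub (by omega : j ≤ m), show m - (j + 1) = m - j - 1 by omega]
  linear_combination u ^ (m - j - 1) * pJCoeff_recurrence s N m hs hm j

lemma pJ_ode (hs : -(1 / 2) < s) (hm : m ≤ N) (x : ℝ) :
    (1 + x ^ 2) * deriv (deriv (pJ s N m)) x + 2 * (1 - (s + N)) * x * deriv (pJ s N m) x
      + m * (2 * (s + N) - m - 1) * pJ s N m x = 0 := by
  have h := congrArg Complex.re (pJPoly_ode s N m hs hm x)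
  simp only [pJ_eq_re_eval, deriv_re_eval]
  simpa [Complex.mul_re, ← Complex.ofReal_pow] using h

end PseudoJacobiPolynomial

theorem stmt10 (s : ℝ) (hs : -(1 / 2) < s) (N : ℕ) (hN : 1 ≤ N) (x : ℝ) :
    deriv (fun y : ℝ => (1 + y ^ 2) * rho s N y) x =
      -2 * s * gammaSq s N * phi s N x * pJ s N N x * pJ s N (N - 1) x := by
  have hwronskian := hasDerivAt_weighted_wronskian
    (differentiable_pJ s N N x) (differentiable_pJ s N (N - 1) x)
    (differentiable_deriv_pJ s N N x) (differentiable_deriv_pJ s N (N - 1) x)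
    (pJ_ode s N N hs le_rfl x) (pJ_ode s N (N - 1) hs (Nat.sub_le N 1) x)
  have hrho : (fun y : ℝ => (1 + y ^ 2) * rho s N y) = fun y => gammaSq s N * ((1 + y ^ 2) *
      ((1 + y ^ 2) ^ (-(s + N)) * (pJ s N (N - 1) y * deriv (pJ s N N) y
        - pJ s N N y * deriv (pJ s N (N - 1)) y))) := by
    funext y
    simp only [rho, phi, add_comm (N : ℝ) s]
    ring
  rw [hrho, (hwronskian.const_mul _).deriv, phi, add_comm (N : ℝ) s, Nat.cast_pred hN]
  ring

end
end
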